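/- arXiv:1702.02319 — 2 statements merged into one kernel-verified Lean document; each statement's English description precedes it below -/
import Mathlib

section
/- Let R be a commutative ℚ-algebra and A an n×n matrix over R. Then in the formal power series ring R[[x]], det(I − x·A)⁻¹ = exp(Σ_{k≥1} (x^k/k)·tr(A^k)). Equivalently, det(I − x·A) = exp(−Σ_{k≥1} (x^k/k)·tr(A^k)). -/
/-!
Write `P = det (1 - X • A)` and `T = ∑_{k ≥ 1} tr (A ^ k) X ^ k / k`. Since
`adj (1 - X • A) = P • ∑_k A ^ k X ^ k`, Jacobi's formula gives `P' = -P T'`, so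
`(P exp T)' = 0`. Both `P` and `exp T` have constant term `1`, and over a `ℚ`-algebra a power
series is determined by its derivative and constant term; hence `P exp T = 1`, and
`P = exp (-T)` because `exp T exp (-T) = 1` by the same argument.
-/

open scoped Classical

/-- Formal exponential of a power series over a commutative `ℚ`-algebra.
For series with zero constant term this agrees with `Σ_{k≥0} f^k / k!`,
since `coeff n (f^k) = 0` for `k > n`. -/
noncomputable def pexp {R : Type*} [CommRing R] [Algebra ℚ R]
    (f : PowerSeries R) : PowerSeries R :=
  PowerSeries.mk fun n =>
    PowerSeries.coeff (R := R) n (∑ k ∈ Finset.range (n + 1), (k.factorial : ℚ)⁻¹ • f ^ k)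

attribute [local instance] IsAddTorsionFree.of_module_rat

namespace Derivation

variable {R S : Type*} [CommRing R] [CommRing S] [Algebra R S] (D : Derivation R S S)

theorem leibniz_prod {ι : Type*} [DecidableEq ι] (s : Finset ι) (f : ι → S) :
    D (∏ i ∈ s, f i) = ∑ i ∈ s, D (f i) * ∏ j ∈ s.erase i, f j := by
  induction s using Finset.induction with
  | empty => simp
  | @insert a s ha ih =>
    rw [Finset.prod_insert ha, D.leibniz, ih, Finset.sum_insert ha, Finset.erase_insert ha,
      smul_eq_mul, smul_eq_mul, Finset.mul_sum, mul_comm (∏ j ∈ s, f j), add_comm]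
    congr 1
    refine Finset.sum_congr rfl fun i hi => ?_
    rw [Finset.erase_insert_of_ne (ne_of_mem_of_not_mem hi ha).symm,
      Finset.prod_insert fun h => ha (Finset.mem_of_mem_erase h)]
    ring

variable {ι : Type*} [Fintype ι] [DecidableEq ι]

theorem map_det_eq_sum_det_updateCol (M : Matrix ι ι S) :
    D M.det = ∑ i, (M.updateCol i fun k => D (M k i)).det := by
  simp only [Matrix.det_apply', map_sum]
  rw [Finset.sum_comm]
  refine Finset.sum_congr rfl fun σ _ => ?_
  rw [← zsmul_eq_mul, map_zsmul, leibniz_prod, Finset.smul_sum]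
  refine Finset.sum_congr rfl fun i _ => ?_
  rw [← Finset.mul_prod_erase _ _ (Finset.mem_univ i), Matrix.updateCol_self, zsmul_eq_mul]
  congr 2
  refine Finset.prod_congr rfl fun j hj => ?_
  rw [Matrix.updateCol_ne (Finset.ne_of_mem_erase hj)]

theorem map_det (M : Matrix ι ι S) : D M.det = (M.adjugate * M.map D).trace := by
  rw [map_det_eq_sum_det_updateCol, Matrix.trace]
  refine Finset.sum_congr rfl fun i _ => ?_
  rw [← Matrix.cramer_apply, Matrix.cramer_eq_adjugate_mulVec]
  simp only [Matrix.mulVec, Matrix.diag, Matrix.mul_apply, Matrix.map_apply, dotProduct]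

end Derivation

namespace PowerSeries

variable {R : Type*} [CommRing R] [Algebra ℚ R]

lemma pexp_eq_subst_exp {f : R⟦X⟧} (hf : constantCoeff f = 0) : pexp f = (exp R).subst f := by
  ext n
  rw [pexp, coeff_mk, coeff_subst' (HasSubst.of_constantCoeff_zero' hf), map_sum,
    finsum_eq_sum_of_support_subset _ (s := Finset.range (n + 1))]
  · refine Finset.sum_congr rfl fun k _ => ?_
    rw [coeff_exp, coeff_smul, smul_eq_mul, Algebra.smul_def, one_div]
  · intro k hk
    rw [Finset.coe_range, Set.mem_Iio, Nat.lt_succ_iff]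
    by_contra! hlt
    exact hk <| by
      simp only [X_pow_dvd_iff.mp (pow_dvd_pow_of_dvd (X_dvd_iff.mpr hf) k) n hlt, smul_zero]

lemma constantCoeff_pexp (f : R⟦X⟧) : constantCoeff (pexp f) = 1 := by
  rw [← coeff_zero_eq_constantCoeff_apply, pexp, coeff_mk]
  simp

lemma derivative_pexp {f : R⟦X⟧} (hf : constantCoeff f = 0) :
    d⁄dX R (pexp f) = pexp f * d⁄dX R f := by
  rw [pexp_eq_subst_exp hf, derivative_subst (HasSubst.of_constantCoeff_zero' hf),
    derivative_exp]

lemma pexp_mul_pexp_neg {f : R⟦X⟧} (hf : constantCoeff f = 0) : pexp f * pexp (-f) = 1 := by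
  have hf' : constantCoeff (-f) = 0 := by rw [map_neg, hf, neg_zero]
  refine derivative.ext ?_ ?_
  · rw [Derivation.leibniz, derivative_pexp hf, derivative_pexp hf', map_neg, derivative_one,
      smul_eq_mul, smul_eq_mul]
    ring
  · rw [map_mul, constantCoeff_pexp, constantCoeff_pexp, map_one, one_mul]

lemma derivative_mk_inv_smul (a : ℕ → R) :
    d⁄dX R (mk fun k => if k = 0 then 0 else (k : ℚ)⁻¹ • a k) = mk fun k => a (k + 1) := by
  ext k
  rw [coeff_derivative, coeff_mk, coeff_mk, if_neg k.succ_ne_zero, ← Nat.cast_add_one,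
    ← map_natCast (algebraMap ℚ R), ← Algebra.commutes, ← Algebra.smul_def, smul_smul,
    mul_inv_cancel₀ (by positivity), one_smul]

end PowerSeries

namespace Matrix

open PowerSeries

variable {R : Type*} [CommRing R] {ι : Type*} [Fintype ι] [DecidableEq ι] (A : Matrix ι ι R)

noncomputable def geomSeries : Matrix ι ι R⟦X⟧ :=
  of fun i j => mk fun k => (A ^ k) i j

lemma map_C_mul_geomSeries :
    A.map C * geomSeries A = of fun i j => mk fun k => (A ^ (k + 1)) i j := by
  ext i j k
  simp only [mul_apply, map_sum, geomSeries, map_apply, of_apply, coeff_C_mul, coeff_mk,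
    pow_succ']

lemma one_sub_X_smul_mul_geomSeries : (1 - (X : R⟦X⟧) • A.map C) * geomSeries A = 1 := by
  rw [sub_mul, smul_mul, one_mul, map_C_mul_geomSeries, sub_eq_iff_eq_add]
  ext i j : 1
  rw [add_apply, smul_apply, of_apply, smul_eq_mul, geomSeries, of_apply,
    eq_X_mul_shift_add_const (mk fun k => (A ^ k) i j), constantCoeff_mk]
  simp [one_apply, apply_ite C, add_comm]

lemma adjugate_one_sub_X_smul :
    (1 - (X : R⟦X⟧) • A.map C).adjugate =
      (1 - (X : R⟦X⟧) • A.map C).det • geomSeries A := by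
  set B := 1 - (X : R⟦X⟧) • A.map C
  calc B.adjugate = B.adjugate * (B * geomSeries A) := by
        rw [one_sub_X_smul_mul_geomSeries, Matrix.mul_one]
    _ = B.det • geomSeries A := by
        rw [← Matrix.mul_assoc, adjugate_mul, smul_mul, Matrix.one_mul]

lemma trace_map_C_mul_geomSeries :
    (A.map C * geomSeries A).trace = mk fun k => (A ^ (k + 1)).trace := by
  ext k
  simp [map_C_mul_geomSeries, trace]

lemma constantCoeff_det_one_sub_X_smul :
    constantCoeff (1 - (X : R⟦X⟧) • A.map C).det = 1 := by
  have : (constantCoeff (R := R)).mapMatrix (1 - (X : R⟦X⟧) • A.map C) = 1 := by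
    ext i j
    simp [one_apply, apply_ite constantCoeff]
  rw [RingHom.map_det, this, det_one]

omit [Fintype ι] in
lemma map_derivative_one_sub_X_smul :
    (1 - (X : R⟦X⟧) • A.map C).map (d⁄dX R) = -A.map C := by
  ext i j
  simp [one_apply, apply_ite (d⁄dX R)]

lemma derivative_det_one_sub_X_smul :
    d⁄dX R (1 - (X : R⟦X⟧) • A.map C).det =
      -((1 - (X : R⟦X⟧) • A.map C).det * mk fun k => (A ^ (k + 1)).trace) := by
  rw [Derivation.map_det, map_derivative_one_sub_X_smul, adjugate_one_sub_X_smul, smul_mul,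
    Matrix.mul_neg, smul_neg, trace_neg, trace_smul, trace_mul_comm, trace_map_C_mul_geomSeries,
    smul_eq_mul]

end Matrix

open PowerSeries in
/-- For an `n×n` matrix `A` over a commutative `ℚ`-algebra `R`, in `R[[x]]`:
`det(I - x A)⁻¹ = exp(Σ_{k≥1} (x^k/k) tr(A^k))`, equivalently
`det(I - x A) = exp(-Σ_{k≥1} (x^k/k) tr(A^k))`. -/
theorem stmt_4 {R : Type*} [CommRing R] [Algebra ℚ R] {n : ℕ}
    (A : Matrix (Fin n) (Fin n) R) :
    (Matrix.det (1 - (PowerSeries.X : PowerSeries R) •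
          A.map (PowerSeries.C (R := R))) *
        pexp (PowerSeries.mk fun k =>
          if k = 0 then 0 else (k : ℚ)⁻¹ • Matrix.trace (A ^ k)) = 1) ∧
    Matrix.det (1 - (PowerSeries.X : PowerSeries R) • A.map (PowerSeries.C (R := R))) =
      pexp (-(PowerSeries.mk fun k =>
        if k = 0 then 0 else (k : ℚ)⁻¹ • Matrix.trace (A ^ k))) := by
  set T : R⟦X⟧ := mk fun k => if k = 0 then 0 else (k : ℚ)⁻¹ • Matrix.trace (A ^ k)
  set p := Matrix.det (1 - (X : R⟦X⟧) • A.map C)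
  have hT0 : constantCoeff T = 0 := by simp [T]
  have hd : d⁄dX R p = -(p * d⁄dX R T) := by
    rw [Matrix.derivative_det_one_sub_X_smul, derivative_mk_inv_smul]
  have h_mul : p * pexp T = 1 := by
    refine derivative.ext ?_ ?_
    · rw [Derivation.leibniz, derivative_pexp hT0, hd, derivative_one, smul_eq_mul,
        smul_eq_mul]
      ring
    · rw [map_mul, Matrix.constantCoeff_det_one_sub_X_smul, constantCoeff_pexp, map_one, one_mul]
  refine ⟨h_mul, ?_⟩
  calc p = p * (pexp T * pexp (-T)) := by rw [pexp_mul_pexp_neg hT0, mul_one]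
    _ = pexp (-T) := by rw [← mul_assoc, h_mul, one_mul]
end

section
/- Let R be a commutative ℚ-algebra and consider the formal power series ring R[[s_0, s_1, s_2, …]] in countably many variables. Suppose τ and τ' are formal power series satisfying, for every n ≥ 1, the equations ∂τ/∂s_n = (1/(n+1)!)·∂^{n+1}τ/∂s_0^{n+1} and ∂τ'/∂s_n = (1/(n+1)!)·∂^{n+1}τ'/∂s_0^{n+1}. If τ and τ' become equal after setting s_n = 0 for all n ≥ 1, then τ = τ'. -/
/-!
The equations are linear, so it suffices to show that a solution `f` with no pure powers of `s_0`
is zero. The coefficient of `s^m` in the `n`-th equation reads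
`(m_n + 1) f_{m + e_n} = c_n (m_0 + 1) ⋯ (m_0 + n + 1) f_{m + (n+1) e_0}`, so over `ℚ` each factor
`s_n` (`n ≥ 1`) of a monomial can be traded for `s_0^{n+1}`; doing this until only `s_0` is left
shows that every coefficient of `f` vanishes.
-/

/-- The formal partial derivative `∂/∂s_n` on formal power series in the
countably many variables `s_0, s_1, s_2, …`. -/
noncomputable def sderiv {R : Type*} [CommRing R] (n : ℕ)
    (f : MvPowerSeries ℕ R) : MvPowerSeries ℕ R :=
  fun m => (m n + 1) • MvPowerSeries.coeff (m + Finsupp.single n 1) f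

open MvPowerSeries Finsupp

section
variable {R : Type*} [CommRing R]

theorem coeff_sderiv (n : ℕ) (f : MvPowerSeries ℕ R) (m : ℕ →₀ ℕ) :
    coeff m (sderiv n f) = (m n + 1) • coeff (m + single n 1) f :=
  rfl

theorem coeff_iterate_sderiv (n k : ℕ) (f : MvPowerSeries ℕ R) (m : ℕ →₀ ℕ) :
    coeff m ((sderiv n)^[k] f) = (m n + 1).ascFactorial k • coeff (m + single n k) f := by
  induction k generalizing f with
  | zero => simp
  | succ k ih =>
    rw [Function.iterate_succ_apply, ih, coeff_sderiv, smul_smul, add_assoc, ← single_add,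
      Nat.ascFactorial_succ]
    simp [add_right_comm, mul_comm]

noncomputable def sderivAddHom (n : ℕ) : MvPowerSeries ℕ R →+ MvPowerSeries ℕ R where
  toFun := sderiv n
  map_zero' := by ext m; simp [coeff_sderiv]
  map_add' f g := by ext m; simp [coeff_sderiv, smul_add]

theorem sderiv_sub (n : ℕ) (f g : MvPowerSeries ℕ R) :
    sderiv n (f - g) = sderiv n f - sderiv n g :=
  map_sub (sderivAddHom n) f g

theorem iterate_sderiv_sub (n k : ℕ) (f g : MvPowerSeries ℕ R) :
    (sderiv n)^[k] (f - g) = (sderiv n)^[k] f - (sderiv n)^[k] g :=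
  iterate_map_sub (sderivAddHom n) k f g

variable [Module ℚ R]

theorem coeff_rat_smul (c : ℚ) (f : MvPowerSeries ℕ R) (m : ℕ →₀ ℕ) :
    coeff m (c • f) = c • coeff m f :=
  rfl

theorem coeff_add_single_eq_zero {n : ℕ} {c : ℚ} {f : MvPowerSeries ℕ R}
    (hf : sderiv n f = c • (sderiv 0)^[n + 1] f) {m : ℕ →₀ ℕ}
    (hm : coeff (m + single 0 (n + 1)) f = 0) : coeff (m + single n 1) f = 0 := by
  have h := congrArg (coeff m) hf
  rw [coeff_sderiv, coeff_rat_smul, coeff_iterate_sderiv, hm, smul_zero, smul_zero,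
    ← Nat.cast_smul_eq_nsmul ℚ] at h
  exact (smul_eq_zero.mp h).resolve_left (Nat.cast_ne_zero.mpr (m n).succ_ne_zero)

theorem eq_zero_of_coeff_single_zero_eq_zero {c : ℕ → ℚ} {f : MvPowerSeries ℕ R}
    (hf : ∀ n, 1 ≤ n → sderiv n f = c n • (sderiv 0)^[n + 1] f)
    (h0 : ∀ k, coeff (single 0 k) f = 0) : f = 0 := by
  -- A monomial is `s_0^k` times the product of the variables listed in `s`; the `s_0`-exponent
  -- is kept apart from `s` because trading `s_a` for `s_0^(a+1)` raises it.
  suffices h : ∀ (s : Multiset ℕ) (k : ℕ), coeff (single 0 k + Multiset.toFinsupp s) f = 0 by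
    ext m
    simpa using h (toMultiset m) 0
  intro s
  induction s using Multiset.induction_on with
  | empty => simpa using h0
  | cons a s ih =>
    intro k
    rw [← Multiset.singleton_add, Multiset.toFinsupp_add, Multiset.toFinsupp_singleton]
    rcases Nat.eq_zero_or_pos a with rfl | ha
    · simpa [← add_assoc, ← single_add] using ih (k + 1)
    · rw [add_left_comm, add_comm]
      refine coeff_add_single_eq_zero (hf a ha) ?_
      simpa [add_right_comm _ _ (single 0 _), ← single_add] using ih (k + (a + 1))
end

/-- Uniqueness for the defining equations of the extended open partition
function: if `τ` and `τ'` both satisfy `∂τ/∂s_n = (1/(n+1)!)·∂^{n+1}τ/∂s_0^{n+1}`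
for all `n ≥ 1` and agree after setting `s_n = 0` for `n ≥ 1` (i.e. their
coefficients agree on all monomials in `s_0` alone), then `τ = τ'`. -/
theorem stmt_9 {R : Type*} [CommRing R] [Algebra ℚ R]
    (τ τ' : MvPowerSeries ℕ R)
    (hτ : ∀ n : ℕ, 1 ≤ n →
      sderiv n τ = ((n + 1).factorial : ℚ)⁻¹ • (sderiv 0)^[n + 1] τ)
    (hτ' : ∀ n : ℕ, 1 ≤ n →
      sderiv n τ' = ((n + 1).factorial : ℚ)⁻¹ • (sderiv 0)^[n + 1] τ')
    (h0 : ∀ k : ℕ, MvPowerSeries.coeff (Finsupp.single 0 k) τ =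
      MvPowerSeries.coeff (Finsupp.single 0 k) τ') :
    τ = τ' := by
  have hsub : ∀ n, 1 ≤ n → sderiv n (τ - τ') =
      ((n + 1).factorial : ℚ)⁻¹ • (sderiv 0)^[n + 1] (τ - τ') := by
    intro n hn
    rw [sderiv_sub, iterate_sderiv_sub, hτ n hn, hτ' n hn, smul_sub]
  refine sub_eq_zero.mp (eq_zero_of_coeff_single_zero_eq_zero hsub fun k => ?_)
  rw [map_sub, h0, sub_self]
end
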